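/- In a minimum-length covering strategy for a tree, if some robot traverses an edge exactly twice, then no other robot traverses that edge. -/

import Mathlib

open Finset

variable {V : Type*}

/-- The list of consecutive steps of a walk given as a list of vertices. -/
def wsteps (W : List V) : List (V × V) := W.zip W.tail

/-- A walk on a graph: a nonempty list of vertices in which consecutive
entries are equal or adjacent. -/
def IsWalk (G : SimpleGraph V) (W : List V) : Prop :=
  W ≠ [] ∧ ∀ p ∈ wsteps W, p.1 = p.2 ∨ G.Adj p.1 p.2

/-- The length of a walk: the number of position-changing moves. -/
def wlen [DecidableEq V] (W : List V) : ℕ :=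
  (wsteps W).countP (fun p => decide (p.1 ≠ p.2))

/-- The number of times a walk traverses the edge `{x, y}` (in either direction). -/
def trav [DecidableEq V] (W : List V) (x y : V) : ℕ :=
  (wsteps W).countP (fun p => decide ((p.1 = x ∧ p.2 = y) ∨ (p.1 = y ∧ p.2 = x)))

/-- The number of times a walk traverses the edge `(x, y)` from `x` to `y`. -/
def dirTrav [DecidableEq V] (W : List V) (x y : V) : ℕ :=
  (wsteps W).countP (fun p => decide (p.1 = x ∧ p.2 = y))

/-- A tuple of walks covers the graph: every vertex appears in some walk. -/
def Covers {k : ℕ} (S : Fin k → List V) : Prop := ∀ v : V, ∃ i, v ∈ S i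

/-- The total length of a strategy: the sum of the lengths of the walks. -/
def slen [DecidableEq V] {k : ℕ} (S : Fin k → List V) : ℕ := ∑ i, wlen (S i)

/-- A minimum-length covering strategy: a tuple of walks covering all vertices whose
total length is no larger than that of any covering strategy with the same starts. -/
def IsMinCover [DecidableEq V] (G : SimpleGraph V) {k : ℕ} (S : Fin k → List V) : Prop :=
  (∀ i, IsWalk G (S i)) ∧ Covers S ∧
    ∀ S' : Fin k → List V, (∀ i, IsWalk G (S' i)) → Covers S' →
      (∀ i, (S' i).head? = (S i).head?) → slen S ≤ slen S'

/-!
Between two consecutive traversals of a tree edge `ab`, starting with `a → b`, a walk stays in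
the component of `b` in `T - ab`, so it makes an excursion `a → b → ⋯ → b → a`. If another
robot traversed `ab`, it would visit `b`; it can then perform the closed walk `b → ⋯ → b` itself
while the first robot skips the excursion. The same vertices are covered from the same starting
points and the two traversals of `ab` are saved, contradicting minimality.
-/

lemma wsteps_cons_cons (a b : V) (l : List V) :
    wsteps (a :: b :: l) = (a, b) :: wsteps (b :: l) := rfl

lemma wsteps_cons_of_head? {L : List V} {b : V} (a : V) (h : L.head? = some b) :
    wsteps (a :: L) = (a, b) :: wsteps L := by
  obtain ⟨M, rfl⟩ := List.head?_eq_some_iff.mp h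
  rfl

lemma wsteps_append_cons (A : List V) (u : V) (B : List V) :
    wsteps (A ++ u :: B) = wsteps (A ++ [u]) ++ wsteps (u :: B) := by
  induction A with
  | nil => rfl
  | cons a A ih =>
    cases A with
    | nil => rfl
    | cons b A =>
      simp only [List.cons_append, wsteps_cons_cons] at ih ⊢
      rw [ih]

lemma wsteps_append_of_getLast? {L : List V} {b : V} (h : L.getLast? = some b) (D : List V) :
    wsteps (L ++ D) = wsteps L ++ wsteps (b :: D) := by
  obtain ⟨N, rfl⟩ := List.getLast?_eq_some_iff.mp h
  rw [List.append_assoc, List.singleton_append, wsteps_append_cons]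

lemma wsteps_splice {L : List V} {b : V} (hh : L.head? = some b) (hl : L.getLast? = some b)
    (C D : List V) :
    wsteps (C ++ L ++ D) = wsteps (C ++ [b]) ++ wsteps L ++ wsteps (b :: D) := by
  obtain ⟨M, rfl⟩ := List.head?_eq_some_iff.mp hh
  rw [List.append_assoc, List.cons_append, wsteps_append_cons, ← List.cons_append,
    wsteps_append_of_getLast? hl, List.append_assoc]

lemma wsteps_excursion {L : List V} {b : V} (hh : L.head? = some b) (hl : L.getLast? = some b)
    (P : List V) (a : V) (Q : List V) :
    wsteps (P ++ a :: (L ++ a :: Q)) =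
      wsteps (P ++ [a]) ++ (a, b) :: (wsteps L ++ (b, a) :: wsteps (a :: Q)) := by
  rw [wsteps_append_cons, wsteps_cons_of_head? a (b := b) (by simp [List.head?_append, hh]),
    wsteps_append_of_getLast? hl, wsteps_cons_cons]

lemma wsteps_subset_of_infix {L W : List V} (h : L <:+: W) : wsteps L ⊆ wsteps W := by
  obtain ⟨s, t, rfl⟩ := h
  rcases L with _ | ⟨u, L⟩
  · simp [wsteps]
  obtain ⟨b, hb⟩ : ∃ b, (u :: L).getLast? = some b :=
    ⟨_, List.getLast?_eq_getLast_of_ne_nil (List.cons_ne_nil u L)⟩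
  rw [List.append_assoc, List.cons_append, wsteps_append_cons, ← List.cons_append,
    wsteps_append_of_getLast? hb]
  intro p hp
  simp [hp]

lemma mem_of_mem_wsteps {W : List V} {p : V × V} (h : p ∈ wsteps W) : p.1 ∈ W ∧ p.2 ∈ W :=
  have h' := List.of_mem_zip h
  ⟨h'.1, List.mem_of_mem_tail h'.2⟩

lemma exists_first_wstep (c : V × V → Prop) :
    ∀ W : List V, (∃ p ∈ wsteps W, c p) →
      ∃ A u v B, W = A ++ u :: v :: B ∧ c (u, v) ∧ ∀ p ∈ wsteps (A ++ [u]), ¬ c p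
  | [], ⟨p, hp, _⟩ | [_], ⟨p, hp, _⟩ => by simp [wsteps] at hp
  | a :: b :: W, ⟨p, hp, hc⟩ => by
    by_cases hab : c (a, b)
    · exact ⟨[], a, b, W, rfl, hab, by simp [wsteps]⟩
    have hp' : p ∈ wsteps (b :: W) := by
      rcases List.mem_cons.mp hp with rfl | hp
      exacts [absurd hc hab, hp]
    obtain ⟨A, u, v, B, hW, huv, hA⟩ := exists_first_wstep c (b :: W) ⟨p, hp', hc⟩
    have hb : (A ++ [u]).head? = some b := by
      simpa [List.head?_append] using congrArg List.head? hW.symm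
    refine ⟨a :: A, u, v, B, by rw [hW]; rfl, huv, ?_⟩
    rw [List.cons_append, wsteps_cons_of_head? a hb]
    rintro p (_ | ⟨_, hp⟩)
    exacts [hab, hA p hp]

lemma reachable_of_wsteps (H : SimpleGraph V) :
    ∀ (z : V) (L : List V), (∀ p ∈ wsteps (z :: L), p.1 = p.2 ∨ H.Adj p.1 p.2) →
      ∀ v ∈ z :: L, H.Reachable z v
  | z, [], _, v, hv => by rw [List.mem_singleton.mp hv]
  | z, w :: L, hL, v, hv => by
    rw [wsteps_cons_cons] at hL
    have hzw : H.Reachable z w := by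
      rcases hL _ List.mem_cons_self with h | h
      exacts [(show z = w from h) ▸ .refl z, h.reachable]
    rcases List.mem_cons.mp hv with rfl | hv
    · exact .refl _
    · exact hzw.trans (reachable_of_wsteps H w L (fun p hp => hL p (.tail _ hp)) v hv)

lemma head?_append_cons (A : List V) (a : V) (l l' : List V) :
    (A ++ a :: l).head? = (A ++ a :: l').head? := by
  cases A <;> rfl

lemma IsWalk.of_infix {G : SimpleGraph V} {L W : List V} (hW : IsWalk G W) (h : L <:+: W)
    (hL : L ≠ []) : IsWalk G L :=
  ⟨hL, fun p hp => hW.2 p (wsteps_subset_of_infix h hp)⟩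

lemma IsWalk.shortcut {G : SimpleGraph V} {P L Q : List V} {a : V}
    (hW : IsWalk G (P ++ a :: (L ++ a :: Q))) : IsWalk G (P ++ a :: Q) := by
  refine ⟨by simp, fun p hp => hW.2 p ?_⟩
  rcases List.mem_append.mp ((wsteps_append_cons P a Q).symm ▸ hp) with hp | hp
  exacts [wsteps_subset_of_infix ⟨[], L ++ a :: Q, by simp⟩ hp,
    wsteps_subset_of_infix ⟨P ++ a :: L, [], by simp⟩ hp]

lemma IsWalk.splice {G : SimpleGraph V} {C D L : List V} {b : V} (hW : IsWalk G (C ++ b :: D))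
    (hL : IsWalk G L) (hh : L.head? = some b) (hl : L.getLast? = some b) :
    IsWalk G (C ++ L ++ D) := by
  refine ⟨by simp [hL.1], fun p hp => ?_⟩
  rw [wsteps_splice hh hl, List.mem_append, List.mem_append] at hp
  rcases hp with (hp | hp) | hp
  · exact hW.2 p (wsteps_subset_of_infix ⟨[], D, by simp⟩ hp)
  · exact hL.2 p hp
  · exact hW.2 p (wsteps_subset_of_infix ⟨C, [], by simp⟩ hp)

lemma Covers.update_excursion {k : ℕ} {S : Fin k → List V} (hS : Covers S) {i j : Fin k}
    (hij : i ≠ j) {P L Q C D : List V} {a b : V} (hbL : b ∈ L)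
    (hSi : S i = P ++ a :: (L ++ a :: Q)) (hSj : S j = C ++ b :: D) :
    Covers (Function.update (Function.update S i (P ++ a :: Q)) j (C ++ L ++ D)) := by
  intro v
  obtain ⟨t, hv⟩ := hS v
  by_cases hti : t = i
  · rw [hti, hSi] at hv
    by_cases hvL : v ∈ L
    · exact ⟨j, by simp [hvL]⟩
    · refine ⟨i, ?_⟩
      simp only [Function.update_of_ne hij, Function.update_self]
      simp_all
  by_cases htj : t = j
  · rw [htj, hSj] at hv
    refine ⟨j, ?_⟩
    simp only [Function.update_self, List.mem_append, List.mem_cons] at hv ⊢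
    rcases hv with hv | rfl | hv <;> simp [*]
  · exact ⟨t, by simp [hti, htj, hv]⟩

section

variable [DecidableEq V]

lemma trav_eq_countP (W : List V) (x y : V) :
    trav W x y = (wsteps W).countP (fun p => decide (s(p.1, p.2) = s(x, y))) := by
  simp only [trav, Sym2.eq_iff]

lemma wlen_splice {L : List V} {b : V} (hh : L.head? = some b) (hl : L.getLast? = some b)
    (C D : List V) : wlen (C ++ L ++ D) = wlen (C ++ b :: D) + wlen L := by
  simp only [wlen, wsteps_splice hh hl, wsteps_append_cons C b D, List.countP_append]
  omega

lemma wlen_excursion {L : List V} {a b : V} (hab : a ≠ b) (hh : L.head? = some b)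
    (hl : L.getLast? = some b) (P Q : List V) :
    wlen (P ++ a :: (L ++ a :: Q)) = wlen (P ++ a :: Q) + wlen L + 2 := by
  simp only [wlen, wsteps_excursion hh hl, wsteps_append_cons P a Q, List.countP_append,
    List.countP_cons, ne_eq, hab, Ne.symm hab, not_false_eq_true, decide_true, ↓reduceIte]
  omega

lemma slen_update {k : ℕ} (S : Fin k → List V) (i : Fin k) (W : List V) :
    slen (Function.update S i W) + wlen (S i) = slen S + wlen W := by
  simp only [slen, ← Function.comp_apply (f := wlen), ← Function.comp_def, Function.comp_update,
    Finset.sum_update_of_mem (Finset.mem_univ i), Finset.sdiff_singleton_eq_erase]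
  rw [← Finset.add_sum_erase _ _ (Finset.mem_univ i)]
  simp only [Function.comp_apply]
  omega

lemma mem_of_trav_ne_zero {W : List V} {x y v : V} (h : trav W x y ≠ 0) (hv : v ∈ s(x, y)) :
    v ∈ W := by
  rw [trav_eq_countP] at h
  obtain ⟨p, hp, hc⟩ := List.countP_pos_iff.mp (Nat.pos_of_ne_zero h)
  rw [← of_decide_eq_true hc, Sym2.mem_iff] at hv
  rcases hv with rfl | rfl
  exacts [(mem_of_mem_wsteps hp).1, (mem_of_mem_wsteps hp).2]

theorem IsWalk.exists_excursion {G : SimpleGraph V} (hG : G.IsAcyclic) {W : List V}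
    (hW : IsWalk G W) {x y : V} (hxy : G.Adj x y) (h2 : 2 ≤ trav W x y) :
    ∃ P L Q a b, s(a, b) = s(x, y) ∧ L.head? = some b ∧ L.getLast? = some b ∧
      W = P ++ a :: (L ++ a :: Q) := by
  rw [trav_eq_countP] at h2
  obtain ⟨P, a, b, R, rfl, hab, hP⟩ :=
    exists_first_wstep (fun p => s(p.1, p.2) = s(x, y)) W
      (by simpa using List.countP_pos_iff.mp (lt_of_lt_of_le two_pos h2))
  have hR : 0 < (wsteps (b :: R)).countP (fun p => decide (s(p.1, p.2) = s(x, y))) := by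
    rw [wsteps_append_cons, wsteps_cons_cons, List.countP_append, List.countP_cons,
      List.countP_eq_zero.mpr (by simpa using hP)] at h2
    simp only [hab, decide_true, ↓reduceIte] at h2
    omega
  obtain ⟨M, c, d, Q, hR', hcd, hM⟩ :=
    exists_first_wstep (fun p => s(p.1, p.2) = s(x, y)) (b :: R)
      (by simpa using List.countP_pos_iff.mp hR)
  obtain ⟨T, hMc⟩ : ∃ T, M ++ [c] = b :: T :=
    List.head?_eq_some_iff.mp (by simpa [List.head?_append] using congrArg List.head? hR'.symm)
  -- the walk from `b` to `c` never uses the bridge `s(a, b)`, so it stays on `b`'s side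
  have hreach : (G.deleteEdges {s(a, b)}).Reachable b c := by
    refine reachable_of_wsteps _ b T (fun p hp => ?_) c (hMc ▸ by simp)
    have hpW : p ∈ wsteps (P ++ a :: b :: R) :=
      wsteps_subset_of_infix ⟨P ++ [a], d :: Q, by simp [hR']⟩ (hMc ▸ hp)
    refine (hW.2 p hpW).imp_right fun h => SimpleGraph.deleteEdges_adj.mpr ⟨h, ?_⟩
    simpa [hab] using hM p (hMc ▸ hp)
  have hadj : G.Adj a b := by rw [← SimpleGraph.mem_edgeSet, hab]; exact hxy
  have hbr := SimpleGraph.isBridge_iff.mp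
    (SimpleGraph.isAcyclic_iff_forall_adj_isBridge.mp hG hadj)
  obtain ⟨hc, hd⟩ : c = b ∧ d = a := by
    rcases Sym2.eq_iff.mp (hcd.trans hab.symm) with ⟨rfl, -⟩ | h
    exacts [absurd hreach.symm hbr, h]
  subst c d
  exact ⟨P, M ++ [b], Q, a, b, hab, by simp [hMc], by simp, by simp [hR']⟩

theorem IsMinCover.not_mem_of_excursion {G : SimpleGraph V} {k : ℕ} {S : Fin k → List V}
    (hS : IsMinCover G S) {i j : Fin k} (hij : i ≠ j) {P L Q : List V} {a b : V} (hab : a ≠ b)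
    (hh : L.head? = some b) (hl : L.getLast? = some b) (hSi : S i = P ++ a :: (L ++ a :: Q)) :
    b ∉ S j := by
  intro hb
  obtain ⟨C, D, hSj⟩ := List.append_of_mem hb
  obtain ⟨M, hM⟩ := List.head?_eq_some_iff.mp hh
  set S' := Function.update (Function.update S i (P ++ a :: Q)) j (C ++ L ++ D)
  have hS'i : S' i = P ++ a :: Q := by simp [S', hij]
  have hS'j : S' j = C ++ L ++ D := by simp [S']
  have hS'o : ∀ t, t ≠ i → t ≠ j → S' t = S t := fun t hi hj => by simp [S', hi, hj]
  have hwalk : ∀ t, IsWalk G (S' t) := by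
    intro t
    by_cases hti : t = i
    · exact hti ▸ hS'i ▸ (hSi ▸ hS.1 i).shortcut
    by_cases htj : t = j
    · have hL : IsWalk G L := (hS.1 i).of_infix ⟨P ++ [a], a :: Q, by simp [hSi]⟩ (by simp [hM])
      exact htj ▸ hS'j ▸ (hSj ▸ hS.1 j).splice hL hh hl
    · exact hS'o t hti htj ▸ hS.1 t
  have hcov : Covers S' := hS.2.1.update_excursion hij (List.mem_of_mem_head? hh) hSi hSj
  have hhead : ∀ t, (S' t).head? = (S t).head? := by
    intro t
    by_cases hti : t = i
    · rw [hti, hS'i, hSi]; exact head?_append_cons P a Q _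
    by_cases htj : t = j
    · rw [htj, hS'j, hSj, hM, List.append_assoc, List.cons_append]
      exact head?_append_cons C b _ D
    · rw [hS'o t hti htj]
  have hlen : slen S' + 2 = slen S := by
    have h1 := slen_update (Function.update S i (P ++ a :: Q)) j (C ++ L ++ D)
    have h2 := slen_update S i (P ++ a :: Q)
    rw [Function.update_of_ne hij.symm, wlen_splice hh hl, ← hSj] at h1
    rw [hSi, wlen_excursion hab hh hl] at h2
    change slen S' + _ = _ at h1
    omega
  have := hS.2.2 S' hwalk hcov hhead
  omega

end

theorem stmt2_general {V : Type*} [DecidableEq V] (G : SimpleGraph V) (hT : G.IsTree)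
    {k : ℕ} (S : Fin k → List V) (hS : IsMinCover G S)
    (i : Fin k) (x y : V) (hxy : G.Adj x y) (h2 : trav (S i) x y = 2) :
    ∀ j : Fin k, j ≠ i → trav (S j) x y = 0 := by
  intro j hji
  by_contra hj
  obtain ⟨P, L, Q, a, b, hab, hh, hl, hSi⟩ := (hS.1 i).exists_excursion hT.isAcyclic hxy h2.ge
  have hadj : G.Adj a b := by rw [← SimpleGraph.mem_edgeSet, hab]; exact hxy
  exact hS.not_mem_of_excursion hji.symm hadj.ne hh hl hSi
    (mem_of_trav_ne_zero hj (hab ▸ Sym2.mem_mk_right a b))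

/-- In a minimum-length covering strategy for a tree, if some robot traverses
an edge exactly twice, then no other robot traverses that edge. -/
theorem stmt2 {V : Type*} [Fintype V] [DecidableEq V] (G : SimpleGraph V) (hT : G.IsTree)
    {k : ℕ} (S : Fin k → List V) (hS : IsMinCover G S)
    (i : Fin k) (x y : V) (hxy : G.Adj x y) (h2 : trav (S i) x y = 2) :
    ∀ j : Fin k, j ≠ i → trav (S j) x y = 0 :=
  stmt2_general G hT S hS i x y hxy h2
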